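/- Let n be an odd natural number and S_n(x) = Σ_{k=0}^{n} ((−1)^k / (2ⁿ (n − 2k))) · C(n,k) · sin((n − 2k)·x − nπ/2). Then S_n is strictly decreasing on the interval [−π, 0]; in particular S_n is injective there, so the conserved density v(B,r) = r^{2+3n/2} S_n(B/r²) is invertible as a function of B for B/r² ∈ [−π, 0]. -/

import Mathlib

open Real Finset

/-- The conserved-density profile for odd `n`. -/
noncomputable def Sodd (n : ℕ) (x : ℝ) : ℝ :=
  ∑ k ∈ Finset.range (n + 1),
    ((-1 : ℝ) ^ k / (2 ^ n * ((n : ℝ) - 2 * k))) * (n.choose k : ℝ) *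
      Real.sin (((n : ℝ) - 2 * k) * x - (n : ℝ) * π / 2)

/-!
The `k`-th summand of `S_n` is an antiderivative of `(-1)^k C(n,k) cos((n-2k)x - nπ/2) / 2ⁿ`
(the factor `n - 2k` never vanishes because `n` is odd), and expanding
`(2i sin x)ⁿ = (e^{ix} - e^{-ix})ⁿ` binomially shows that these cosines add up to `sinⁿ x`.
So `S_n' = sinⁿ`, which is negative on `(-π, 0)` for odd `n`.
-/

theorem Complex.two_mul_I_mul_sin_pow (n : ℕ) (z : ℂ) :
    (2 * I * sin z) ^ n =
      ∑ k ∈ range (n + 1), (-1) ^ k * n.choose k * exp ((n - 2 * k) * z * I) := by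
  have h : 2 * I * sin z = -exp (-z * I) + exp (z * I) := by
    linear_combination I * two_sin z + (exp (-z * I) - exp (z * I)) * I_sq
  rw [h, add_pow]
  refine sum_congr rfl fun k hk => ?_
  have hkn : k ≤ n := Nat.lt_succ_iff.mp (mem_range.mp hk)
  rw [neg_pow, ← exp_nat_mul, ← exp_nat_mul, Nat.cast_sub hkn,
    show ((n : ℂ) - 2 * k) * z * I = k * (-z * I) + (n - k) * (z * I) by ring, exp_add]
  ring

theorem Real.sum_neg_one_pow_mul_choose_mul_cos (n : ℕ) (x : ℝ) :
    ∑ k ∈ range (n + 1), (-1) ^ k * n.choose k * cos ((n - 2 * k) * x - n * π / 2) =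
      2 ^ n * sin x ^ n := by
  have hI : Complex.I ^ n * Complex.exp (-(n * π / 2) * Complex.I) = 1 := by
    nth_rewrite 1 [← Complex.exp_pi_div_two_mul_I]
    rw [← Complex.exp_nat_mul, ← Complex.exp_add]
    ring_nf
    exact Complex.exp_zero
  have key : ((2 ^ n * sin x ^ n : ℝ) : ℂ) = ∑ k ∈ range (n + 1),
      (((-1) ^ k * n.choose k : ℝ) : ℂ) *
        Complex.exp (((n - 2 * k) * x - n * π / 2 : ℝ) * Complex.I) := by
    calc ((2 ^ n * sin x ^ n : ℝ) : ℂ)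
        = (2 * Complex.I * Complex.sin x) ^ n * Complex.exp (-(n * π / 2) * Complex.I) := by
          push_cast
          linear_combination (-(2 : ℂ) ^ n * Complex.sin x ^ n) * hI
      _ = _ := by
          rw [Complex.two_mul_I_mul_sin_pow, sum_mul]
          refine sum_congr rfl fun k _ => ?_
          push_cast
          rw [mul_assoc, ← Complex.exp_add]
          ring_nf
  have hre := congrArg Complex.re key
  simp only [Complex.ofReal_re, Complex.re_sum, Complex.re_ofReal_mul,
    Complex.exp_ofReal_mul_I_re] at hre
  exact hre.symm

theorem hasDerivAt_Sodd {n : ℕ} (hn : Odd n) (x : ℝ) : HasDerivAt (Sodd n) (sin x ^ n) x := by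
  have hterm : ∀ k ∈ range (n + 1), HasDerivAt
      (fun y => (-1) ^ k / (2 ^ n * ((n : ℝ) - 2 * k)) * n.choose k *
        sin ((n - 2 * k) * y - n * π / 2))
      ((-1) ^ k * n.choose k * cos ((n - 2 * k) * x - n * π / 2) / 2 ^ n) x := by
    intro k _
    have hk : (n : ℝ) - 2 * k ≠ 0 := by
      rw [sub_ne_zero]
      exact_mod_cast fun h => Nat.not_even_iff_odd.mpr hn ⟨k, by omega⟩
    have hlin : HasDerivAt (fun y => (n - 2 * k) * y - n * π / 2) ((n : ℝ) - 2 * k) x := by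
      simpa using ((hasDerivAt_id x).const_mul ((n : ℝ) - 2 * k)).sub_const (n * π / 2)
    refine (hlin.sin.const_mul
      ((-1) ^ k / (2 ^ n * ((n : ℝ) - 2 * k)) * n.choose k)).congr_deriv ?_
    field_simp
  have h := HasDerivAt.fun_sum hterm
  rwa [← sum_div, sum_neg_one_pow_mul_choose_mul_cos,
    mul_div_cancel_left₀ _ (by positivity)] at h

theorem Sodd_strictAntiOn (n : ℕ) (hn : Odd n) :
    StrictAntiOn (Sodd n) (Set.Icc (-π) 0) ∧
    Set.InjOn (Sodd n) (Set.Icc (-π) 0) ∧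
    (∀ r : ℝ, 0 < r →
      Set.InjOn (fun B : ℝ => r ^ ((2 : ℝ) + 3 * (n : ℝ) / 2) * Sodd n (B / r ^ 2))
        {B : ℝ | B / r ^ 2 ∈ Set.Icc (-π) 0}) := by
  have hanti : StrictAntiOn (Sodd n) (Set.Icc (-π) 0) := by
    refine strictAntiOn_of_deriv_neg (convex_Icc _ _)
      (fun x _ => (hasDerivAt_Sodd hn x).continuousAt.continuousWithinAt) fun x hx => ?_
    rw [interior_Icc] at hx
    rw [(hasDerivAt_Sodd hn x).deriv]
    exact hn.pow_neg (sin_neg_of_neg_of_neg_pi_lt hx.2 hx.1)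
  refine ⟨hanti, hanti.injOn, fun r hr B₁ h₁ B₂ h₂ h => ?_⟩
  have hS := hanti.injOn h₁ h₂ (mul_left_cancel₀ (rpow_pos_of_pos hr _).ne' h)
  exact (div_left_inj' (pow_ne_zero 2 hr.ne')).mp hS
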